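/- arXiv:2511.21099 — 3 statements merged into one kernel-verified Lean document; each statement's English description precedes it below -/
import Mathlib

section
/- Let x be a fractional allocation of the items M to the agents N, and suppose every agent i has an additive valuation v_i : 2^M → ℝ≥0. Then there exists a fractional allocation y whose support is contained in the support of x such that (i) the allocation graph G_y is acyclic, and (ii) for every agent i, Σ_{j∈M} v_i({j}) y_{i,j} ≥ Σ_{j∈M} v_i({j}) x_{i,j}. -/
open Finset

/-- A fractional allocation: entries in `[0,1]`, each item fully allocated. -/
def IsFracAlloc {N M : Type*} [Fintype N] (x : N → M → ℝ) : Prop :=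
  (∀ i j, 0 ≤ x i j ∧ x i j ≤ 1) ∧ ∀ j, ∑ i, x i j = 1

/-- The bipartite allocation graph on `N ⊕ M`: agent `i` is adjacent to item `j`
iff `x i j > 0`. -/
def allocGraph {N M : Type*} (x : N → M → ℝ) : SimpleGraph (N ⊕ M) where
  Adj a b :=
    (∃ i j, a = Sum.inl i ∧ b = Sum.inr j ∧ 0 < x i j) ∨
    (∃ i j, a = Sum.inr j ∧ b = Sum.inl i ∧ 0 < x i j)
  symm := by
    refine ⟨?_⟩
    rintro a b (⟨i, j, rfl, rfl, h⟩ | ⟨i, j, rfl, rfl, h⟩)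
    · exact Or.inr ⟨i, j, rfl, rfl, h⟩
    · exact Or.inl ⟨i, j, rfl, rfl, h⟩
  loopless := by
    refine ⟨?_⟩
    rintro a (⟨i, j, rfl, h, -⟩ | ⟨i, j, rfl, h, -⟩) <;> simp at h

/-- An additive valuation. -/
def IsAdditive {M : Type*} (v : Finset M → NNReal) : Prop :=
  ∀ S : Finset M, v S = ∑ j ∈ S, v {j}

/-- A monotone valuation. -/
def IsMonotoneVal {M : Type*} (v : Finset M → NNReal) : Prop :=
  ∀ A B : Finset M, A ⊆ B → v A ≤ v B

/-- A submodular valuation. -/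
def IsSubmodular {M : Type*} [DecidableEq M] (v : Finset M → NNReal) : Prop :=
  ∀ A B : Finset M, v (A ∪ B) + v (A ∩ B) ≤ v A + v B

/-- A normalized valuation. -/
def IsNormalized {M : Type*} (v : Finset M → NNReal) : Prop := v ∅ = 0

/-- The multilinear extension of a set function. -/
noncomputable def mlExt {M : Type*} [Fintype M] [DecidableEq M]
    (v : Finset M → NNReal) (y : M → ℝ) : ℝ :=
  ∑ S : Finset M, (v S : ℝ) * ((∏ j ∈ S, y j) * ∏ j ∈ Sᶜ, (1 - y j))

/-- `max_{j : row j > 0} v {j}` (0 if the support is empty). -/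
noncomputable def maxOnSupport {M : Type*} [Fintype M]
    (v : Finset M → NNReal) (row : M → ℝ) : NNReal :=
  (Finset.univ.filter fun j => 0 < row j).sup fun j => v {j}

/-- An integral allocation: a partition of the items among the agents. -/
def IsPartition {N M : Type*} (A : N → Finset M) : Prop := ∀ j : M, ∃! i : N, j ∈ A i

/-- The concave closure `f⁺` of a set function. -/
noncomputable def concaveClosure {M : Type*} [Fintype M] [DecidableEq M]
    (v : Finset M → NNReal) (y : M → ℝ) : ℝ :=
  sSup {r : ℝ | ∃ lam : Finset M → ℝ, (∀ S, 0 ≤ lam S) ∧ (∑ S : Finset M, lam S = 1) ∧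
    (∀ j : M, (∑ S : Finset M, lam S * (if j ∈ S then 1 else 0)) = y j) ∧
    r = ∑ S : Finset M, lam S * (v S : ℝ)}

/-- The maximin-share value of `v` over `n` parts. -/
noncomputable def mmsValue {M : Type*} (n : ℕ) (v : Finset M → NNReal) : ℝ :=
  sSup {r : ℝ | ∃ P : Fin n → Finset M, (∀ j : M, ∃! k, j ∈ P k) ∧ r = ⨅ k, (v (P k) : ℝ)}

/-! If `G_x` has a cycle, look at the pairs `F` on it: a cycle has as many edges as vertices,
so `F` has at least as many pairs as it has agents and items. Hence the linear map sending a
perturbation `d` supported on `F` to its column sums and to the value changes of the agents of `F`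
has a domain at least as large as its target: it either has a nonzero kernel or hits
`(0, 1)`. Either way some `d ≠ 0` has zero column sums and lowers no agent's value.
Moving `x` along `d` until an entry vanishes shrinks the support, so an allocation of minimal
support among those with support in that of `x` and no lower values has an acyclic graph. -/

section Graph

variable {N M : Type*} {x : N → M → ℝ}

theorem exists_sym2_eq_of_allocGraph_adj {a b : N ⊕ M} (h : (allocGraph x).Adj a b) :
    ∃ i j, 0 < x i j ∧ s(Sum.inl i, Sum.inr j) = s(a, b) := by
  rcases h with ⟨i, j, rfl, rfl, h⟩ | ⟨i, j, rfl, rfl, h⟩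
  · exact ⟨i, j, h, rfl⟩
  · exact ⟨i, j, h, Sym2.eq_swap⟩

variable [Fintype N] [Fintype M]

noncomputable def allocSupport (x : N → M → ℝ) : Finset (N × M) :=
  univ.filter fun p => 0 < x p.1 p.2

@[simp]
theorem mem_allocSupport {p : N × M} : p ∈ allocSupport x ↔ 0 < x p.1 p.2 := by
  simp [allocSupport]

theorem exists_card_image_add_le_of_not_isAcyclic [DecidableEq N] [DecidableEq M]
    (h : ¬ (allocGraph x).IsAcyclic) :
    ∃ F ⊆ allocSupport x, F.Nonempty ∧ #(F.image Prod.fst) + #(F.image Prod.snd) ≤ #F := by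
  obtain ⟨a, c, hc⟩ : ∃ a, ∃ c : (allocGraph x).Walk a a, c.IsCycle := by
    simpa only [SimpleGraph.IsAcyclic, not_forall, not_not] using h
  let e : N × M → Sym2 (N ⊕ M) := fun p => s(Sum.inl p.1, Sum.inr p.2)
  let F := univ.filter fun p => e p ∈ c.edges
  have hF : ∀ p ∈ F, e p ∈ c.edges := fun p hp => (mem_filter.mp hp).2
  have hedges : c.length ≤ #F := calc
    c.length = #c.edges.toFinset := by
      rw [List.toFinset_card_of_nodup hc.edges_nodup, c.length_edges]
    _ ≤ #(F.image e) := by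
      refine card_le_card fun z hz => ?_
      induction z using Sym2.ind with
      | h a b =>
        have hab := List.mem_toFinset.mp hz
        obtain ⟨i, j, -, hij⟩ := exists_sym2_eq_of_allocGraph_adj (c.adj_of_mem_edges hab)
        exact mem_image.mpr ⟨(i, j), by simpa [F, e, hij] using hab, hij⟩
    _ ≤ #F := card_image_le
  have htail : ∀ w ∈ c.support, w ∈ c.support.tail := fun w hw =>
    (c.mem_support_iff.mp hw).elim (fun h => h ▸ c.end_mem_tail_support hc.not_nil) id
  have hverts : #(F.image Prod.fst) + #(F.image Prod.snd) ≤ c.length := calc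
    _ = #((F.image Prod.fst).disjSum (F.image Prod.snd)) := (card_disjSum _ _).symm
    _ ≤ #c.support.tail.toFinset := by
      refine card_le_card fun w hw => List.mem_toFinset.mpr (htail w ?_)
      rcases w with i | j
      · obtain ⟨p, hp, rfl⟩ := mem_image.mp (inl_mem_disjSum.mp hw)
        exact c.fst_mem_support_of_mem_edges (hF p hp)
      · obtain ⟨p, hp, rfl⟩ := mem_image.mp (inr_mem_disjSum.mp hw)
        exact c.snd_mem_support_of_mem_edges (hF p hp)
    _ = c.length := by
      rw [List.toFinset_card_of_nodup hc.support_nodup, List.length_tail, c.length_support]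
      rfl
  refine ⟨F, fun p hp => ?_, card_pos.mp (by have := hc.three_le_length; omega),
    hverts.trans hedges⟩
  simpa [allocGraph] using c.adj_of_mem_edges (hF p hp)

end Graph

open Module in
theorem LinearMap.exists_ne_zero_map_eq_zero_or_eq {K V W : Type*} [DivisionRing K]
    [AddCommGroup V] [Module K V] [FiniteDimensional K V]
    [AddCommGroup W] [Module K W] [FiniteDimensional K W]
    (f : V →ₗ[K] W) (hdim : finrank K W ≤ finrank K V) {w : W} (hw : w ≠ 0) :
    ∃ v ≠ 0, f v = 0 ∨ f v = w := by
  by_cases hinj : Function.Injective f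
  · have hsurj : Function.Surjective f :=
      (injective_iff_surjective_of_finrank_eq_finrank
        (le_antisymm (finrank_le_finrank_of_injective hinj) hdim)).mp hinj
    obtain ⟨v, rfl⟩ := hsurj w
    exact ⟨v, fun hv => hw (by rw [hv, map_zero]), Or.inr rfl⟩
  · obtain ⟨v, hv, hv0⟩ := not_forall₂.mp (mt (injective_iff_map_eq_zero f).mpr hinj)
    exact ⟨v, hv0, Or.inl hv⟩

open Module in
theorem exists_improving_direction_of_card_le {N M : Type*} [Fintype N] [Fintype M]
    [DecidableEq N] [DecidableEq M] (F : Finset (N × M)) (hF : F.Nonempty)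
    (hcard : #(F.image Prod.fst) + #(F.image Prod.snd) ≤ #F) (u : N → M → ℝ) :
    ∃ d : N → M → ℝ, d ≠ 0 ∧ (∀ i j, d i j ≠ 0 → (i, j) ∈ F) ∧ (∀ j, ∑ i, d i j = 0) ∧
      ∀ i, 0 ≤ ∑ j, u i j * d i j := by
  set A := F.image Prod.fst
  set B := F.image Prod.snd
  let D : (F → ℝ) →ₗ[ℝ] N → M → ℝ :=
    { toFun := fun t i j => ∑ p : F, if p.1 = (i, j) then t p else 0
      map_add' := fun s t => by ext i j; simp [← sum_add_distrib, ite_add_zero]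
      map_smul' := fun c t => by ext i j; simp [mul_sum] }
  let Φ : (F → ℝ) →ₗ[ℝ] (B → ℝ) × (A → ℝ) :=
    (LinearMap.pi fun j : B => ∑ i, (LinearMap.proj j.1 ∘ₗ LinearMap.proj i) ∘ₗ D).prod
      (LinearMap.pi fun i : A => ∑ j, u i j • (LinearMap.proj j ∘ₗ LinearMap.proj i.1) ∘ₗ D)
  have hdim : finrank ℝ ((B → ℝ) × (A → ℝ)) ≤ finrank ℝ (F → ℝ) := by
    simpa [finrank_prod, add_comm] using hcard
  have hw : ((0, 1) : (B → ℝ) × (A → ℝ)) ≠ 0 := by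
    obtain ⟨p, hp⟩ := hF
    intro h
    simpa using congr_fun (congr_arg Prod.snd h) ⟨p.1, mem_image_of_mem _ hp⟩
  obtain ⟨t, ht, hΦ⟩ := Φ.exists_ne_zero_map_eq_zero_or_eq hdim hw
  have hcol : (Φ t).1 = 0 := by rcases hΦ with h | h <;> simp [h]
  have hval : 0 ≤ (Φ t).2 := by rcases hΦ with h | h <;> simp [h]
  have hDF : ∀ i j, D t i j ≠ 0 → (i, j) ∈ F := by
    intro i j h
    obtain ⟨p, -, hp⟩ := exists_ne_zero_of_sum_ne_zero h
    exact (ite_ne_right_iff.mp hp).1 ▸ p.2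
  refine ⟨D t, ?_, hDF, fun j => ?_, fun i => ?_⟩
  · obtain ⟨p, hp⟩ := Function.ne_iff.mp ht
    refine Function.ne_iff.mpr ⟨p.1.1, Function.ne_iff.mpr ⟨p.1.2, ?_⟩⟩
    simpa [D, ← Subtype.ext_iff] using hp
  · by_cases hj : j ∈ B
    · simpa [Φ] using congr_fun hcol ⟨j, hj⟩
    · refine sum_eq_zero fun i _ => not_ne_iff.mp fun h => hj ?_
      exact mem_image_of_mem Prod.snd (hDF i j h)
  · by_cases hi : i ∈ A
    · simpa [Φ] using hval ⟨i, hi⟩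
    · refine (sum_eq_zero fun j _ => ?_).ge
      rw [not_ne_iff.mp fun h => hi (mem_image_of_mem Prod.fst (hDF i j h)), mul_zero]

theorem exists_pos_add_mul_nonneg_eq_zero {ι : Type*} [Fintype ι] {x d : ι → ℝ}
    (hx : ∀ k, 0 ≤ x k) (hdx : ∀ k, d k < 0 → 0 < x k) (hd : ∃ k, d k < 0) :
    ∃ ε > 0, (∀ k, 0 ≤ x k + ε * d k) ∧ ∃ k, d k < 0 ∧ x k + ε * d k = 0 := by
  obtain ⟨k, hk, hmin⟩ := (univ.filter fun k => d k < 0).exists_min_image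
    (fun k => x k / -d k) (by simpa [Finset.Nonempty] using hd)
  have hk : d k < 0 := (mem_filter.mp hk).2
  refine ⟨x k / -d k, div_pos (hdx k hk) (neg_pos.mpr hk), fun l => ?_, k, hk, ?_⟩
  · rcases le_or_gt 0 (d l) with hl | hl
    · exact add_nonneg (hx l) (mul_nonneg (div_nonneg (hx k) (neg_pos.mpr hk).le) hl)
    · have := (le_div_iff₀ (neg_pos.mpr hl)).mp (hmin l (mem_filter.mpr ⟨mem_univ l, hl⟩))
      linarith
  · field_simp [hk.ne]
    ring

theorem isFracAlloc_iff {N M : Type*} [Fintype N] {x : N → M → ℝ} :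
    IsFracAlloc x ↔ (∀ i j, 0 ≤ x i j) ∧ ∀ j, ∑ i, x i j = 1 := by
  refine ⟨fun h => ⟨fun i j => (h.1 i j).1, h.2⟩, fun ⟨h0, h1⟩ => ⟨fun i j => ⟨h0 i j, ?_⟩, h1⟩⟩
  exact h1 j ▸ single_le_sum (fun i _ => h0 i j) (mem_univ i)

section Cancelling

variable {N M : Type*} [Fintype N] [Fintype M] {x : N → M → ℝ}

theorem IsFracAlloc.exists_support_ssubset_of_direction {d u : N → M → ℝ}
    (hx : IsFracAlloc x) (hd : d ≠ 0) (hdx : ∀ i j, d i j ≠ 0 → 0 < x i j)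
    (hcol : ∀ j, ∑ i, d i j = 0) (hu : ∀ i, 0 ≤ ∑ j, u i j * d i j) :
    ∃ y, IsFracAlloc y ∧ allocSupport y ⊂ allocSupport x ∧
      ∀ i, ∑ j, u i j * x i j ≤ ∑ j, u i j * y i j := by
  have hneg : ∃ p : N × M, d p.1 p.2 < 0 := by
    by_contra! h
    refine hd (funext fun i => funext fun j => ?_)
    exact (sum_eq_zero_iff_of_nonneg fun i _ => h (i, j)).mp (hcol j) i (mem_univ i)
  obtain ⟨ε, hε, hnonneg, ⟨i₀, j₀⟩, hneg₀, hzero⟩ := exists_pos_add_mul_nonneg_eq_zero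
    (x := fun p : N × M => x p.1 p.2) (fun p => (hx.1 p.1 p.2).1)
    (fun p hp => hdx p.1 p.2 hp.ne) hneg
  refine ⟨fun i j => x i j + ε * d i j, isFracAlloc_iff.mpr ⟨fun i j => hnonneg (i, j), ?_⟩,
    (ssubset_iff_of_subset fun p => ?_).mpr ⟨(i₀, j₀), ?_⟩, fun i => ?_⟩
  · intro j
    rw [sum_add_distrib, ← mul_sum, hcol, hx.2, mul_zero, add_zero]
  · simp only [mem_allocSupport]
    intro hp
    by_cases hdp : d p.1 p.2 = 0
    · simpa [hdp] using hp
    · exact hdx _ _ hdp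
  · simp [hdx _ _ hneg₀.ne, hzero]
  · have := mul_nonneg hε.le (hu i)
    simp only [mul_add, sum_add_distrib, mul_left_comm _ ε, ← mul_sum]
    linarith

theorem IsFracAlloc.exists_support_ssubset_of_not_isAcyclic (hx : IsFracAlloc x)
    (hG : ¬ (allocGraph x).IsAcyclic) (u : N → M → ℝ) :
    ∃ y, IsFracAlloc y ∧ allocSupport y ⊂ allocSupport x ∧
      ∀ i, ∑ j, u i j * x i j ≤ ∑ j, u i j * y i j := by
  classical
  obtain ⟨F, hFx, hF, hcard⟩ := exists_card_image_add_le_of_not_isAcyclic hG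
  obtain ⟨d, hd, hdF, hcol, hu⟩ := exists_improving_direction_of_card_le F hF hcard u
  exact hx.exists_support_ssubset_of_direction hd
    (fun i j h => mem_allocSupport.mp (hFx (hdF i j h))) hcol hu

end Cancelling

theorem stmt0_general {N M : Type*} [Fintype N] [Fintype M]
    (v : N → Finset M → NNReal)
    (x : N → M → ℝ) (hx : IsFracAlloc x) :
    ∃ y : N → M → ℝ, IsFracAlloc y ∧
      (∀ i j, 0 < y i j → 0 < x i j) ∧
      (allocGraph y).IsAcyclic ∧
      ∀ i, ∑ j, (v i {j} : ℝ) * x i j ≤ ∑ j, (v i {j} : ℝ) * y i j := by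
  let u i j : ℝ := v i {j}
  let S := {y | IsFracAlloc y ∧ allocSupport y ⊆ allocSupport x ∧
    ∀ i, ∑ j, u i j * x i j ≤ ∑ j, u i j * y i j}
  obtain ⟨y, ⟨hy, hyx, hyu⟩, hmin⟩ := (measure fun y => #(allocSupport y)).wf.has_min S
    ⟨x, hx, subset_rfl, fun _ => le_rfl⟩
  refine ⟨y, hy, fun i j h =>
    mem_allocSupport.mp (hyx (show (i, j) ∈ allocSupport y from mem_allocSupport.mpr h)), ?_, hyu⟩
  by_contra hG
  obtain ⟨z, hz, hzy, hzu⟩ := hy.exists_support_ssubset_of_not_isAcyclic hG u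
  exact hmin z ⟨hz, hzy.subset.trans hyx, fun i => (hyu i).trans (hzu i)⟩ (card_lt_card hzy)

/-- cycle canceling for additive valuations. -/
theorem stmt0 {N M : Type*} [Fintype N] [Fintype M] [DecidableEq M]
    (v : N → Finset M → NNReal) (hv : ∀ i, IsAdditive (v i))
    (x : N → M → ℝ) (hx : IsFracAlloc x) :
    ∃ y : N → M → ℝ, IsFracAlloc y ∧
      (∀ i j, 0 < y i j → 0 < x i j) ∧
      (allocGraph y).IsAcyclic ∧
      ∀ i, ∑ j, (v i {j} : ℝ) * x i j ≤ ∑ j, (v i {j} : ℝ) * y i j :=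
  stmt0_general v x hx
end

section
/- Let f : 2^M → ℝ be a submodular set function with multilinear extension F, let x ∈ [0,1]^M, and let j ≠ k be two elements of M. Then the function t ↦ F(x + t·(e_j − e_k)) is convex on the interval of t for which x + t·(e_j − e_k) ∈ [0,1]^M, where e_j and e_k denote the standard coordinate vectors. -/
open Finset

/-- A submodular set function. -/
def IsSubmodularR {M : Type*} [DecidableEq M] (f : Finset M → ℝ) : Prop :=
  ∀ A B : Finset M, f (A ∪ B) + f (A ∩ B) ≤ f A + f B

/-- A monotone set function. -/
def IsMonotoneR {M : Type*} (f : Finset M → ℝ) : Prop :=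
  ∀ A B : Finset M, A ⊆ B → f A ≤ f B

/-- The multilinear extension of a set function. -/
noncomputable def mlExtR {M : Type*} [Fintype M] [DecidableEq M]
    (f : Finset M → ℝ) (y : M → ℝ) : ℝ :=
  ∑ S : Finset M, f S * ((∏ j ∈ S, y j) * ∏ j ∈ Sᶜ, (1 - y j))

/-- The direction vector `e_j - e_k`. -/
def dirVec {M : Type*} [DecidableEq M] (j k l : M) : ℝ :=
  (if l = j then 1 else 0) - (if l = k then 1 else 0)

section Aux

variable {M : Type*} [Fintype M] [DecidableEq M]

/-- One term of the multilinear extension along the line. -/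
noncomputable def termR (f : Finset M → ℝ) (x : M → ℝ) (j k : M) (S : Finset M) (t : ℝ) : ℝ :=
  f S * ((∏ l ∈ S, (x l + t * dirVec j k l)) * ∏ l ∈ Sᶜ, (1 - (x l + t * dirVec j k l)))

/-- The nonnegative constant coefficient (product over "fixed" coordinates). -/
noncomputable def coefC (x : M → ℝ) (j k : M) (T : Finset M) : ℝ :=
  (∏ l ∈ T, x l) * ∏ l ∈ (Tᶜ.erase j).erase k, (1 - x l)

noncomputable def coefA (f : Finset M → ℝ) (x : M → ℝ) (j k : M) (T : Finset M) : ℝ :=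
  coefC x j k T * (f (insert j T) + f (insert k T) - f (insert j (insert k T)) - f T)

noncomputable def coefB (f : Finset M → ℝ) (x : M → ℝ) (j k : M) (T : Finset M) : ℝ :=
  coefC x j k T * (f T * ((1 - x j) - (1 - x k)) - f (insert k T) * ((1 - x j) + x k)
    + f (insert j T) * ((1 - x k) + x j) + f (insert j (insert k T)) * (x k - x j))

noncomputable def coefZ (f : Finset M → ℝ) (x : M → ℝ) (j k : M) (T : Finset M) : ℝ :=
  coefC x j k T * (f T * (1 - x j) * (1 - x k) + f (insert k T) * x k * (1 - x j)
    + f (insert j T) * x j * (1 - x k) + f (insert j (insert k T)) * (x j * x k))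

lemma eraseComm {M : Type*} [DecidableEq M] (s : Finset M) (a b : M) :
    (s.erase a).erase b = (s.erase b).erase a := by
  ext l; simp only [Finset.mem_erase]; tauto

lemma quartet (f : Finset M → ℝ) (x : M → ℝ) (j k : M) (hjk : j ≠ k)
    (T : Finset M) (hjT : j ∉ T) (hkT : k ∉ T) (t : ℝ) :
    termR f x j k T t + termR f x j k (insert k T) t +
      (termR f x j k (insert j T) t + termR f x j k (insert j (insert k T)) t)
    = coefA f x j k T * t ^ 2 + coefB f x j k T * t + coefZ f x j k T := by
  have hdj : dirVec j k j = (1 : ℝ) := by simp [dirVec, hjk]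
  have hdk : dirVec j k k = (-1 : ℝ) := by simp [dirVec, hjk, Ne.symm hjk]
  have hdo : ∀ l : M, l ≠ j → l ≠ k → dirVec j k l = 0 := by
    intro l h1 h2; simp [dirVec, h1, h2]
  set y : M → ℝ := fun l => x l + t * dirVec j k l with hy
  have hyj : y j = x j + t := by simp [hy, hdj]
  have hyk : y k = x k - t := by
    show x k + t * dirVec j k k = x k - t
    rw [hdk]; ring
  have hyo : ∀ l : M, l ≠ j → l ≠ k → y l = x l := by
    intro l h1 h2; simp [hy, hdo l h1 h2]
  -- membership facts
  have hjkT : j ∉ insert k T := by simp [hjk, hjT]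
  have hjc : j ∈ Tᶜ := by simpa using hjT
  have hkc : k ∈ Tᶜ := by simpa using hkT
  -- products over the "constant" sets
  set P : ℝ := ∏ l ∈ T, x l with hP
  set Q : ℝ := ∏ l ∈ (Tᶜ.erase j).erase k, (1 - x l) with hQ
  have hPy : ∏ l ∈ T, y l = P := by
    refine Finset.prod_congr rfl fun l hl => ?_
    exact hyo l (fun h => hjT (h ▸ hl)) (fun h => hkT (h ▸ hl))
  have hQy : ∀ W : Finset M, W = (Tᶜ.erase j).erase k → ∏ l ∈ W, (1 - y l) = Q := by
    rintro W rfl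
    refine Finset.prod_congr rfl fun l hl => ?_
    have h2 := Finset.mem_erase.1 hl
    have h1 := Finset.mem_erase.1 h2.2
    rw [hyo l h1.1 h2.1]
  -- term over T
  have e00 : termR f x j k T t = f T * (P * ((1 - y j) * ((1 - y k) * Q))) := by
    rw [termR, hPy]
    have hk' : k ∈ Tᶜ.erase j := Finset.mem_erase.2 ⟨Ne.symm hjk, hkc⟩
    rw [← Finset.mul_prod_erase _ _ hjc, ← Finset.mul_prod_erase _ _ hk', hQy _ rfl]
  -- term over insert k T
  have e01 : termR f x j k (insert k T) t = f (insert k T) * ((y k * P) * ((1 - y j) * Q)) := by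
    rw [termR, Finset.prod_insert hkT, hPy, Finset.compl_insert]
    have hj' : j ∈ Tᶜ.erase k := Finset.mem_erase.2 ⟨hjk, hjc⟩
    rw [← Finset.mul_prod_erase _ _ hj', eraseComm, hQy _ rfl]
  -- term over insert j T
  have e10 : termR f x j k (insert j T) t = f (insert j T) * ((y j * P) * ((1 - y k) * Q)) := by
    rw [termR, Finset.prod_insert hjT, hPy, Finset.compl_insert]
    have hk' : k ∈ Tᶜ.erase j := Finset.mem_erase.2 ⟨Ne.symm hjk, hkc⟩
    rw [← Finset.mul_prod_erase _ _ hk', hQy _ rfl]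
  -- term over insert j (insert k T)
  have e11 : termR f x j k (insert j (insert k T)) t
      = f (insert j (insert k T)) * ((y j * (y k * P)) * Q) := by
    rw [termR, Finset.prod_insert hjkT, Finset.prod_insert hkT, hPy,
      Finset.compl_insert, Finset.compl_insert]
    rw [eraseComm, hQy _ rfl]
  rw [e00, e01, e10, e11, hyj, hyk, coefA, coefB, coefZ, coefC, ← hP, ← hQ]
  ring

end Aux

/-- the multilinear extension of a submodular function is convex along
directions `e_j - e_k`. -/
theorem stmt5 {M : Type*} [Fintype M] [DecidableEq M]
    (f : Finset M → ℝ) (hf : IsSubmodularR f)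
    (x : M → ℝ) (hx : ∀ l, 0 ≤ x l ∧ x l ≤ 1)
    (j k : M) (hjk : j ≠ k) :
    ConvexOn ℝ
      {t : ℝ | ∀ l, 0 ≤ x l + t * dirVec j k l ∧ x l + t * dirVec j k l ≤ 1}
      (fun t => mlExtR f fun l => x l + t * dirVec j k l) := by
  set U : Finset M := ((univ : Finset M).erase j).erase k with hU
  have hjU : j ∉ U := by simp [hU]
  have hkU : k ∉ U := by simp [hU]
  have hjkU : j ∉ insert k U := by simp [hU, hjk]
  have hUniv : (univ : Finset M) = insert j (insert k U) := by
    rw [hU, Finset.insert_erase (Finset.mem_erase.2 ⟨Ne.symm hjk, Finset.mem_univ k⟩),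
      Finset.insert_erase (Finset.mem_univ j)]
  set A : ℝ := ∑ T ∈ U.powerset, coefA f x j k T with hA
  set B : ℝ := ∑ T ∈ U.powerset, coefB f x j k T with hB
  set C : ℝ := ∑ T ∈ U.powerset, coefZ f x j k T with hC
  -- the function is the quadratic A t² + B t + C
  have hquad : ∀ t : ℝ, mlExtR f (fun l => x l + t * dirVec j k l)
      = A * t ^ 2 + B * t + C := by
    intro t
    have : mlExtR f (fun l => x l + t * dirVec j k l)
        = ∑ S ∈ (univ : Finset M).powerset, termR f x j k S t := by
      rw [Finset.powerset_univ]; rfl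
    rw [this, hUniv, Finset.sum_powerset_insert hjkU, Finset.sum_powerset_insert hkU,
      Finset.sum_powerset_insert hkU, ← Finset.sum_add_distrib, ← Finset.sum_add_distrib,
      ← Finset.sum_add_distrib]
    have : ∀ T ∈ U.powerset,
        termR f x j k T t + termR f x j k (insert k T) t +
          (termR f x j k (insert j T) t + termR f x j k (insert j (insert k T)) t)
        = coefA f x j k T * t ^ 2 + coefB f x j k T * t + coefZ f x j k T := by
      intro T hT
      have hTU := Finset.mem_powerset.1 hT
      exact quartet f x j k hjk T (fun h => hjU (hTU h)) (fun h => hkU (hTU h)) t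
    rw [Finset.sum_congr rfl this]
    rw [hA, hB, hC]
    simp only [Finset.sum_add_distrib, Finset.sum_mul]
  -- A is nonnegative
  have hA0 : 0 ≤ A := by
    rw [hA]
    refine Finset.sum_nonneg fun T hT => ?_
    have hTU := Finset.mem_powerset.1 hT
    have hjT : j ∉ T := fun h => hjU (hTU h)
    have hkT : k ∉ T := fun h => hkU (hTU h)
    have hC0 : 0 ≤ coefC x j k T := by
      refine mul_nonneg (Finset.prod_nonneg fun l _ => (hx l).1)
        (Finset.prod_nonneg fun l _ => ?_)
      linarith [(hx l).2]
    have hun : insert j T ∪ insert k T = insert j (insert k T) := by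
      rw [Finset.insert_union, Finset.union_insert, Finset.union_self]
    have hin : insert j T ∩ insert k T = T := by
      ext l
      simp only [Finset.mem_inter, Finset.mem_insert]
      constructor
      · rintro ⟨h1 | h1, h2 | h2⟩
        · exact absurd (h1 ▸ h2) hjk
        · exact h2
        · exact h1
        · exact h1
      · exact fun h => ⟨Or.inr h, Or.inr h⟩
    have := hf (insert j T) (insert k T)
    rw [hun, hin] at this
    rw [coefA]
    have : 0 ≤ f (insert j T) + f (insert k T) - f (insert j (insert k T)) - f T := by
      linarith
    exact mul_nonneg hC0 this
  -- the domain is convex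
  have hconv : Convex ℝ {t : ℝ | ∀ l, 0 ≤ x l + t * dirVec j k l ∧ x l + t * dirVec j k l ≤ 1} := by
    intro t1 h1 t2 h2 a b ha hb hab
    intro l
    simp only [smul_eq_mul]
    have key : x l + (a * t1 + b * t2) * dirVec j k l
        = a * (x l + t1 * dirVec j k l) + b * (x l + t2 * dirVec j k l) := by
      linear_combination (-(x l)) * hab
    rw [key]
    constructor
    · have := mul_nonneg ha (h1 l).1
      have := mul_nonneg hb (h2 l).1
      linarith
    · have := mul_le_mul_of_nonneg_left (h1 l).2 ha
      have := mul_le_mul_of_nonneg_left (h2 l).2 hb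
      nlinarith
  refine ⟨hconv, ?_⟩
  intro t1 _ t2 _ a b ha hb hab
  simp only [smul_eq_mul]
  rw [hquad, hquad, hquad]
  have hkey : a * (A * t1 ^ 2 + B * t1 + C) + b * (A * t2 ^ 2 + B * t2 + C)
      - (A * (a * t1 + b * t2) ^ 2 + B * (a * t1 + b * t2) + C)
      = A * (a * b) * (t1 - t2) ^ 2 := by
    linear_combination (C - A * a * t1 ^ 2 - A * b * t2 ^ 2) * hab
  linarith [hkey, mul_nonneg (mul_nonneg hA0 (mul_nonneg ha hb)) (sq_nonneg (t1 - t2))]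
end

section
/- Let f : 2^M → ℝ be a monotone, submodular, normalized set function with multilinear extension F, let x ∈ [0,1]^M, and let d ∈ ℝ^M with d_j ≥ 0 for all j. Then the function t ↦ F(x + t·d) is concave on the interval of t ≥ 0 for which x + t·d ∈ [0,1]^M. -/
/-!
Along the line `t ↦ x + t • d` every weight `∏_{j ∈ S} y_j ∏_{j ∉ S} (1 - y_j)` of the
multilinear extension is a product of affine functions of `t`, and no factor is repeated, so the
second derivative of `t ↦ F(x + t • d)` is
`∑_{i ≠ k} d_i d_k ∑_{T ⊆ M \ {i, k}} P_T(t) (f(T + i + k) + f(T) - f(T + i) - f(T + k))`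
with `P_T(t) ≥ 0` inside the unit cube. Submodularity makes every bracket nonpositive.
-/

open Finset

section AffineProd

variable {ι : Type*}

def affineProd (s : Finset ι) (a c : ι → ℝ) (t : ℝ) : ℝ :=
  ∏ j ∈ s, (a j + t * c j)

theorem hasDerivAt_affineProd [DecidableEq ι] (s : Finset ι) (a c : ι → ℝ) (t : ℝ) :
    HasDerivAt (affineProd s a c) (∑ i ∈ s, c i * affineProd (s.erase i) a c t) t := by
  have h := HasDerivAt.fun_finsetProd (u := s) (x := t) fun j _ =>
    ((hasDerivAt_id t).mul_const (c j)).const_add (a j)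
  simp only [id, one_mul, smul_eq_mul] at h
  exact h.congr_deriv (sum_congr rfl fun i _ => mul_comm _ _)

theorem hasDerivAt_sum_mul_affineProd_erase [DecidableEq ι] (s : Finset ι) (a c : ι → ℝ)
    (t : ℝ) :
    HasDerivAt (fun t => ∑ i ∈ s, c i * affineProd (s.erase i) a c t)
      (∑ i ∈ s, c i * ∑ k ∈ s.erase i, c k * affineProd ((s.erase i).erase k) a c t) t :=
  HasDerivAt.fun_sum fun i _ => (hasDerivAt_affineProd _ a c t).const_mul (c i)

end AffineProd

theorem sum_eq_sum_powerset_erase_erase {α β : Type*} [Fintype α] [DecidableEq α]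
    [AddCommMonoid β] {i k : α} (hik : i ≠ k) (F : Finset α → β) :
    ∑ S, F S = ∑ T ∈ ((univ.erase i).erase k).powerset,
      (F T + F (insert i T) + F (insert k T) + F (insert i (insert k T))) := by
  have hk : k ∉ (univ.erase i).erase k := by simp
  have hi : i ∉ insert k ((univ.erase i).erase k) := by simp [hik]
  have huniv : (univ : Finset α) = insert i (insert k ((univ.erase i).erase k)) := by
    rw [insert_erase (mem_erase.2 ⟨hik.symm, mem_univ k⟩), insert_erase (mem_univ i)]
  rw [← powerset_univ]
  conv_lhs => rw [huniv]
  rw [sum_powerset_insert hi, sum_powerset_insert hk,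
    sum_powerset_insert hk, ← sum_add_distrib, ← sum_add_distrib, ← sum_add_distrib]
  refine sum_congr rfl fun T _ => ?_
  abel

theorem IsSubmodularR.insert_insert_add_le {α : Type*} [DecidableEq α] {f : Finset α → ℝ}
    (hf : IsSubmodularR f) {i k : α} (hik : i ≠ k) (T : Finset α) :
    f (insert i (insert k T)) + f T ≤ f (insert i T) + f (insert k T) := by
  have hunion : insert i T ∪ insert k T = insert i (insert k T) := by
    ext; simp only [mem_union, mem_insert]; tauto
  have hinter : insert i T ∩ insert k T = T := by
    ext; simp only [mem_inter, mem_insert]; grind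
  simpa only [hunion, hinter] using hf (insert i T) (insert k T)

section LineRestriction

variable {M : Type*} [DecidableEq M]

def lineBase (x : M → ℝ) (S : Finset M) (j : M) : ℝ := if j ∈ S then x j else 1 - x j

def lineSlope (d : M → ℝ) (S : Finset M) (j : M) : ℝ := if j ∈ S then d j else -d j

theorem mlExtR_line [Fintype M] (f : Finset M → ℝ) (x d : M → ℝ) (t : ℝ) :
    mlExtR f (fun l => x l + t * d l)
      = ∑ S, f S * affineProd univ (lineBase x S) (lineSlope d S) t := by
  refine sum_congr rfl fun S _ => ?_
  rw [affineProd, ← prod_mul_prod_compl S]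
  congr 2 <;> refine prod_congr rfl fun j hj => ?_
  · simp [lineBase, lineSlope, hj]
  · simp only [lineBase, lineSlope, if_neg (mem_compl.1 hj)]
    ring

theorem affineProd_line_insert_of_notMem {s : Finset M} {i : M} (hi : i ∉ s) (x d : M → ℝ)
    (T : Finset M) (t : ℝ) :
    affineProd s (lineBase x (insert i T)) (lineSlope d (insert i T)) t
      = affineProd s (lineBase x T) (lineSlope d T) t :=
  prod_congr rfl fun j hj => by
    simp [lineBase, lineSlope, ne_of_mem_of_not_mem hj hi]

theorem lineBase_add_mul_lineSlope_nonneg {x d : M → ℝ} {t : ℝ} {j : M}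
    (h : 0 ≤ x j + t * d j ∧ x j + t * d j ≤ 1) (S : Finset M) :
    0 ≤ lineBase x S j + t * lineSlope d S j := by
  unfold lineBase lineSlope
  split_ifs <;> linarith [h.1, h.2]

variable [Fintype M] {f : Finset M → ℝ} {x d : M → ℝ} {t : ℝ}

theorem sum_mul_lineSlope_mul_lineSlope_nonpos (hf : IsSubmodularR f) (hd : ∀ l, 0 ≤ d l)
    (ht : ∀ l, 0 ≤ x l + t * d l ∧ x l + t * d l ≤ 1) {i k : M} (hik : i ≠ k) :
    ∑ S, f S * (lineSlope d S i * (lineSlope d S k *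
      affineProd ((univ.erase i).erase k) (lineBase x S) (lineSlope d S) t)) ≤ 0 := by
  rw [sum_eq_sum_powerset_erase_erase hik]
  refine sum_nonpos fun T hT => ?_
  set U := (univ.erase i).erase k
  have hiU : i ∉ U := by simp [U, hik]
  have hkU : k ∉ U := by simp [U]
  have hiT : i ∉ T := fun h => hiU (mem_powerset.1 hT h)
  have hkT : k ∉ T := fun h => hkU (mem_powerset.1 hT h)
  have hP : 0 ≤ affineProd U (lineBase x T) (lineSlope d T) t :=
    prod_nonneg fun j _ => lineBase_add_mul_lineSlope_nonneg (ht j) T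
  simp only [affineProd_line_insert_of_notMem hiU, affineProd_line_insert_of_notMem hkU]
  simp only [lineSlope, mem_insert, hiT, hkT, hik, hik.symm, or_true, or_false, if_true,
    if_false]
  calc _ = d i * d k * affineProd U (lineBase x T) (lineSlope d T) t *
        (f (insert i (insert k T)) + f T - f (insert i T) - f (insert k T)) := by ring
    _ ≤ 0 := mul_nonpos_of_nonneg_of_nonpos (mul_nonneg (mul_nonneg (hd i) (hd k)) hP)
        (by linarith [hf.insert_insert_add_le hik T])

theorem sum_mul_sum_lineSlope_mul_sum_lineSlope_nonpos (hf : IsSubmodularR f)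
    (hd : ∀ l, 0 ≤ d l) (ht : ∀ l, 0 ≤ x l + t * d l ∧ x l + t * d l ≤ 1) :
    ∑ S, f S * ∑ i, lineSlope d S i * ∑ k ∈ univ.erase i, lineSlope d S k *
      affineProd ((univ.erase i).erase k) (lineBase x S) (lineSlope d S) t ≤ 0 := by
  simp only [mul_sum]
  rw [sum_comm]
  refine sum_nonpos fun i _ => ?_
  rw [sum_comm]
  exact sum_nonpos fun k hk =>
    sum_mul_lineSlope_mul_lineSlope_nonpos hf hd ht (ne_of_mem_erase hk).symm

end LineRestriction

theorem convex_setOf_line_mem_unitCube {M : Type*} (x d : M → ℝ) :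
    Convex ℝ {t : ℝ | 0 ≤ t ∧ ∀ l, 0 ≤ x l + t * d l ∧ x l + t * d l ≤ 1} := by
  intro t₁ h₁ t₂ h₂ a b ha hb hab
  simp only [smul_eq_mul]
  refine ⟨add_nonneg (mul_nonneg ha h₁.1) (mul_nonneg hb h₂.1), fun l => ?_⟩
  have hcomb :
      x l + (a * t₁ + b * t₂) * d l = a * (x l + t₁ * d l) + b * (x l + t₂ * d l) := by
    linear_combination (-x l) * hab
  rw [hcomb]
  constructor <;> nlinarith [h₁.2 l, h₂.2 l]

theorem stmt8_general {M : Type*} [Fintype M] [DecidableEq M]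
    (f : Finset M → ℝ) (hsub : IsSubmodularR f)
    (x : M → ℝ)
    (d : M → ℝ) (hd : ∀ l, 0 ≤ d l) :
    ConcaveOn ℝ
      {t : ℝ | 0 ≤ t ∧ ∀ l, 0 ≤ x l + t * d l ∧ x l + t * d l ≤ 1}
      (fun t => mlExtR f fun l => x l + t * d l) := by
  simp only [mlExtR_line]
  have hderiv₁ t := HasDerivAt.fun_sum (u := univ) fun S _ =>
    (hasDerivAt_affineProd univ (lineBase x S) (lineSlope d S) t).const_mul (f S)
  have hderiv₂ t := HasDerivAt.fun_sum (u := univ) fun S _ =>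
    (hasDerivAt_sum_mul_affineProd_erase univ (lineBase x S) (lineSlope d S) t).const_mul (f S)
  exact concaveOn_of_hasDerivWithinAt2_nonpos (convex_setOf_line_mem_unitCube x d)
    (fun t _ => (hderiv₁ t).continuousAt.continuousWithinAt)
    (fun t _ => (hderiv₁ t).hasDerivWithinAt) (fun t _ => (hderiv₂ t).hasDerivWithinAt)
    fun t ht => sum_mul_sum_lineSlope_mul_sum_lineSlope_nonpos hsub hd (interior_subset ht).2

/-- the multilinear extension of a monotone submodular normalized function
is concave along nonnegative directions. -/
theorem stmt8 {M : Type*} [Fintype M] [DecidableEq M]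
    (f : Finset M → ℝ) (hmono : IsMonotoneR f) (hsub : IsSubmodularR f)
    (hnorm : f ∅ = 0)
    (x : M → ℝ) (hx : ∀ l, 0 ≤ x l ∧ x l ≤ 1)
    (d : M → ℝ) (hd : ∀ l, 0 ≤ d l) :
    ConcaveOn ℝ
      {t : ℝ | 0 ≤ t ∧ ∀ l, 0 ≤ x l + t * d l ∧ x l + t * d l ≤ 1}
      (fun t => mlExtR f fun l => x l + t * d l) :=
  stmt8_general f hsub x d hd
end
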